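/- Let S = {|α_i⟩⊗|β_i⟩}_{i=1}^{|S|} be a UPB in H_A ⊗ H_B, d = min(dim H_A, dim H_B), ε = min over unit product vectors of Σ_i |⟨φ_A|α_i⟩|²|⟨φ_B|β_i⟩|² (which is > 0), and |Ψ⟩ a maximally entangled state. Define H = Σ_i |α_i⟩⟨α_i| ⊗ |β_i⟩⟨β_i| − dε |Ψ⟩⟨Ψ|. Then for all unit product states |φ_A⟩⊗|φ_B⟩, ⟨φ_A ⊗ φ_B| H |φ_A ⊗ φ_B⟩ ≥ 0. -/

import Mathlib

open scoped BigOperators ComplexConjugate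

noncomputable section

def inC {ι : Type*} [Fintype ι] (x y : ι → ℂ) : ℂ := ∑ i, conj (x i) * y i

def prodVec {ι κ : Type*} (a : ι → ℂ) (b : κ → ℂ) : ι × κ → ℂ := fun p => a p.1 * b p.2

def outer {ι : Type*} (x : ι → ℂ) : Matrix ι ι ℂ := Matrix.vecMulVec x (star x)

def ONFam {σ ι : Type*} [DecidableEq σ] [Fintype ι] (f : σ → ι → ℂ) : Prop :=
  ∀ i j, inC (f i) (f j) = if i = j then 1 else 0

def IsUPB {σ ιA ιB : Type*} [DecidableEq σ] [Fintype σ] [Fintype ιA] [Fintype ιB]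
    (α : σ → ιA → ℂ) (β : σ → ιB → ℂ) : Prop :=
  ONFam (fun i => prodVec (α i) (β i)) ∧
  Submodule.span ℂ (Set.range fun i => prodVec (α i) (β i)) ≠ ⊤ ∧
  ∀ (a : ιA → ℂ) (b : ιB → ℂ), a ≠ 0 → b ≠ 0 →
    (∀ i, inC (prodVec (α i) (β i)) (prodVec a b) = 0) → False

/-- A maximally entangled state: Schmidt form `(1/√d) Σ_{i<d} a_i ⊗ b_i` with
orthonormal families, `d = min m n`. -/
def MaxEnt {m n : ℕ} (Ψ : Fin m × Fin n → ℂ) : Prop :=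
  ∃ (a : Fin (min m n) → Fin m → ℂ) (b : Fin (min m n) → Fin n → ℂ),
    ONFam a ∧ ONFam b ∧
    Ψ = fun p => ((Real.sqrt (min m n) : ℝ) : ℂ)⁻¹ * (∑ i, prodVec (a i) (b i)) p

/-! On a unit product state the UPB projector has expectation at least `ε` by the definition
of `ε`, while Cauchy–Schwarz and Bessel's inequality in each factor give
`|⟨Ψ|φ_A ⊗ φ_B⟩|² ≤ 1/d`, so the entangled term removes at most `dε · (1/d) = ε`. -/

open Matrix

lemma inC_eq_inner {ι : Type*} [Fintype ι] (x y : ι → ℂ) :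
    inC x y = inner ℂ (WithLp.toLp 2 x) (WithLp.toLp 2 y) := by
  simp [inC, PiLp.inner_apply, mul_comm]

lemma inC_eq_star_dotProduct {ι : Type*} [Fintype ι] (x y : ι → ℂ) : inC x y = star x ⬝ᵥ y :=
  rfl

lemma norm_inC_comm {ι : Type*} [Fintype ι] (x y : ι → ℂ) : ‖inC x y‖ = ‖inC y x‖ := by
  rw [inC_eq_inner, inC_eq_inner, norm_inner_symm]

lemma inC_smul_left {ι : Type*} [Fintype ι] (c : ℂ) (x y : ι → ℂ) :
    inC (c • x) y = conj c * inC x y := by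
  simp [inC_eq_star_dotProduct, star_smul, smul_dotProduct]

lemma inC_smul_right {ι : Type*} [Fintype ι] (c : ℂ) (x y : ι → ℂ) :
    inC x (c • y) = c * inC x y := by
  simp [inC_eq_star_dotProduct]

lemma inC_sub_right {ι : Type*} [Fintype ι] (x y z : ι → ℂ) :
    inC x (y - z) = inC x y - inC x z := by
  simp [inC_eq_star_dotProduct]

lemma inC_sum_right {ι σ : Type*} [Fintype ι] [Fintype σ] (x : ι → ℂ) (f : σ → ι → ℂ) :
    inC x (∑ i, f i) = ∑ i, inC x (f i) := by
  simp [inC_eq_star_dotProduct, dotProduct_sum]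

lemma inC_sum_left {ι σ : Type*} [Fintype ι] [Fintype σ] (f : σ → ι → ℂ) (x : ι → ℂ) :
    inC (∑ i, f i) x = ∑ i, inC (f i) x := by
  simp [inC_eq_star_dotProduct, star_sum, sum_dotProduct]

lemma inC_prodVec {ι κ : Type*} [Fintype ι] [Fintype κ] (a c : ι → ℂ) (b d : κ → ℂ) :
    inC (prodVec a b) (prodVec c d) = inC a c * inC b d := by
  simp only [inC, prodVec, Fintype.sum_prod_type, Finset.sum_mul_sum, map_mul]
  exact Finset.sum_congr rfl fun _ _ => Finset.sum_congr rfl fun _ _ => by ring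

lemma outer_mulVec {ι : Type*} [Fintype ι] (y x : ι → ℂ) : outer y *ᵥ x = inC y x • y := by
  simp [outer, vecMulVec_mulVec, inC_eq_star_dotProduct]

lemma inC_outer_mulVec {ι : Type*} [Fintype ι] (y x : ι → ℂ) :
    inC x (outer y *ᵥ x) = ((‖inC y x‖ ^ 2 : ℝ) : ℂ) := by
  rw [outer_mulVec, inC_smul_right, inC_eq_inner x y, ← inner_conj_symm, ← inC_eq_inner,
    Complex.mul_conj']
  push_cast
  rfl

lemma inC_sum_outer_sub_smul_outer_mulVec {ι σ : Type*} [Fintype ι] [Fintype σ]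
    (v : σ → ι → ℂ) (c : ℝ) (Ψ x : ι → ℂ) :
    inC x ((∑ i, outer (v i) - (c : ℂ) • outer Ψ) *ᵥ x) =
      ((∑ i, ‖inC (v i) x‖ ^ 2 - c * ‖inC Ψ x‖ ^ 2 : ℝ) : ℂ) := by
  simp only [sub_mulVec, smul_mulVec, sum_mulVec, inC_sub_right, inC_smul_right, inC_sum_right,
    inC_outer_mulVec]
  push_cast
  rfl

lemma ONFam.orthonormal {σ ι : Type*} [DecidableEq σ] [Fintype ι] {a : σ → ι → ℂ}
    (ha : ONFam a) : Orthonormal ℂ fun i => WithLp.toLp 2 (a i) := by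
  rw [orthonormal_iff_ite]
  intro i j
  rw [← inC_eq_inner]
  exact ha i j

lemma ONFam.sum_norm_sq_inC_le_one {σ ι : Type*} [DecidableEq σ] [Fintype σ] [Fintype ι]
    {a : σ → ι → ℂ} (ha : ONFam a) {φ : ι → ℂ} (hφ : inC φ φ = 1) :
    ∑ i, ‖inC (a i) φ‖ ^ 2 ≤ 1 := by
  have hnorm : ‖WithLp.toLp 2 φ‖ ^ 2 = 1 := by
    rw [← inner_self_eq_norm_sq (𝕜 := ℂ), ← inC_eq_inner, hφ, RCLike.one_re]
  simpa only [inC_eq_inner, hnorm] using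
    ha.orthonormal.sum_inner_products_le (WithLp.toLp 2 φ) (s := .univ)

lemma norm_sum_mul_sq_le {σ : Type*} [Fintype σ] (x y : σ → ℂ) :
    ‖∑ i, x i * y i‖ ^ 2 ≤ (∑ i, ‖x i‖ ^ 2) * ∑ i, ‖y i‖ ^ 2 :=
  calc ‖∑ i, x i * y i‖ ^ 2 ≤ (∑ i, ‖x i‖ * ‖y i‖) ^ 2 := by
        gcongr
        simpa only [norm_mul] using norm_sum_le .univ fun i => x i * y i
    _ ≤ _ := Finset.sum_mul_sq_le_sq_mul_sq _ (fun i => ‖x i‖) (fun i => ‖y i‖)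

lemma norm_sq_inC_sum_prodVec_le_one {σ ι κ : Type*} [DecidableEq σ] [Fintype σ] [Fintype ι]
    [Fintype κ] {a : σ → ι → ℂ} {b : σ → κ → ℂ} (ha : ONFam a) (hb : ONFam b)
    {φA : ι → ℂ} {φB : κ → ℂ} (hφA : inC φA φA = 1) (hφB : inC φB φB = 1) :
    ‖inC (∑ i, prodVec (a i) (b i)) (prodVec φA φB)‖ ^ 2 ≤ 1 := by
  rw [inC_sum_left]
  simp only [inC_prodVec]
  calc _ ≤ (∑ i, ‖inC (a i) φA‖ ^ 2) * ∑ i, ‖inC (b i) φB‖ ^ 2 := norm_sum_mul_sq_le _ _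
    _ ≤ 1 * 1 := by
        gcongr
        · exact ha.sum_norm_sq_inC_le_one hφA
        · exact hb.sum_norm_sq_inC_le_one hφB
    _ = 1 := one_mul 1

lemma MaxEnt.min_mul_norm_sq_inC_prodVec_le_one {m n : ℕ} {Ψ : Fin m × Fin n → ℂ}
    (hΨ : MaxEnt Ψ) {φA : Fin m → ℂ} {φB : Fin n → ℂ} (hφA : inC φA φA = 1)
    (hφB : inC φB φB = 1) :
    (min m n : ℝ) * ‖inC Ψ (prodVec φA φB)‖ ^ 2 ≤ 1 := by
  obtain ⟨a, b, ha, hb, rfl⟩ := hΨ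
  set d : ℝ := min m n
  have hd : 0 ≤ d := by positivity
  have hΨ_smul : (fun p => ((√d : ℝ) : ℂ)⁻¹ * (∑ i, prodVec (a i) (b i)) p) =
      (((√d)⁻¹ : ℝ) : ℂ) • ∑ i, prodVec (a i) (b i) := by
    ext p; simp
  rw [hΨ_smul, inC_smul_left, norm_mul, mul_pow, Complex.norm_conj, Complex.norm_real,
    Real.norm_eq_abs, sq_abs, inv_pow, Real.sq_sqrt hd, ← mul_assoc]
  exact mul_le_one₀ mul_inv_le_one (sq_nonneg _) (norm_sq_inC_sum_prodVec_le_one ha hb hφA hφB)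

theorem witness_nonneg_on_product_states_general
    (m n s : ℕ)
    (α : Fin s → Fin m → ℂ) (β : Fin s → Fin n → ℂ)
    (ε : ℝ) (hε : 0 < ε)
    (hεmin : ∀ (a : Fin m → ℂ) (b : Fin n → ℂ), inC a a = 1 → inC b b = 1 →
      ε ≤ ∑ i, ‖inC a (α i)‖ ^ 2 * ‖inC b (β i)‖ ^ 2)
    (Ψ : Fin m × Fin n → ℂ) (hΨ : MaxEnt Ψ)
    (H : Matrix (Fin m × Fin n) (Fin m × Fin n) ℂ)
    (hH : H = (∑ i, outer (prodVec (α i) (β i))) -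
      (((min m n : ℝ) * ε : ℝ) : ℂ) • outer Ψ)
    (φA : Fin m → ℂ) (φB : Fin n → ℂ)
    (hφA : inC φA φA = 1) (hφB : inC φB φB = 1) :
    0 ≤ (inC (prodVec φA φB) (H.mulVec (prodVec φA φB))).re := by
  rw [hH, inC_sum_outer_sub_smul_outer_mulVec, Complex.ofReal_re]
  have hsum : ε ≤ ∑ i, ‖inC (prodVec (α i) (β i)) (prodVec φA φB)‖ ^ 2 := by
    refine (hεmin φA φB hφA hφB).trans_eq (Finset.sum_congr rfl fun i _ => ?_)
    rw [inC_prodVec, norm_mul, mul_pow, norm_inC_comm φA, norm_inC_comm φB]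
  have hΨφ := hΨ.min_mul_norm_sq_inC_prodVec_le_one hφA hφB
  refine sub_nonneg.mpr (le_trans ?_ hsum)
  calc (min m n : ℝ) * ε * ‖inC Ψ (prodVec φA φB)‖ ^ 2
      = ε * ((min m n : ℝ) * ‖inC Ψ (prodVec φA φB)‖ ^ 2) := by ring
    _ ≤ ε * 1 := mul_le_mul_of_nonneg_left hΨφ hε.le
    _ = ε := mul_one ε

/-- the witness `H = Σ_i |α_i⟩⟨α_i|⊗|β_i⟩⟨β_i| − dε|Ψ⟩⟨Ψ|` has
nonnegative expectation on every unit product state. -/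
theorem witness_nonneg_on_product_states
    (m n s : ℕ) (hm : 0 < m) (hn : 0 < n)
    (α : Fin s → Fin m → ℂ) (β : Fin s → Fin n → ℂ)
    (hUPB : IsUPB α β)
    (ε : ℝ) (hε : 0 < ε)
    (hεmin : ∀ (a : Fin m → ℂ) (b : Fin n → ℂ), inC a a = 1 → inC b b = 1 →
      ε ≤ ∑ i, ‖inC a (α i)‖ ^ 2 * ‖inC b (β i)‖ ^ 2)
    (hεatt : ∃ (a : Fin m → ℂ) (b : Fin n → ℂ), inC a a = 1 ∧ inC b b = 1 ∧
      ε = ∑ i, ‖inC a (α i)‖ ^ 2 * ‖inC b (β i)‖ ^ 2)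
    (Ψ : Fin m × Fin n → ℂ) (hΨ : MaxEnt Ψ)
    (H : Matrix (Fin m × Fin n) (Fin m × Fin n) ℂ)
    (hH : H = (∑ i, outer (prodVec (α i) (β i))) -
      (((min m n : ℝ) * ε : ℝ) : ℂ) • outer Ψ)
    (φA : Fin m → ℂ) (φB : Fin n → ℂ)
    (hφA : inC φA φA = 1) (hφB : inC φB φB = 1) :
    0 ≤ (inC (prodVec φA φB) (H.mulVec (prodVec φA φB))).re :=
  witness_nonneg_on_product_states_general m n s α β ε hε hεmin Ψ hΨ H hH φA φB hφA hφB
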